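/- Let R be an associative unital algebra over ℚ, let N ≥ 0, and let π₀, π₁, …, π_N ∈ R satisfy Σ_{i=0}^{N} π_i = 1. Suppose there is a function γ : ℤ → R such that γ(n)·π_j = n^{N−j}·π_j in R for every integer n and every j = 0, …, N (where n^{N−j}·π_j denotes the rational scalar multiple). Then the π_i are pairwise orthogonal idempotents: π_i·π_j = 0 whenever i ≠ j, and π_j·π_j = π_j for every j. -/
import Mathlib

open Polynomial

private lemma aeval_apply_of_smul_eq {R : Type*} [Ring R] [Algebra ℚ R]
    (f : Module.End ℚ R) (μ : ℚ) (x : R) (hx : f x = μ • x) (p : ℚ[X]) :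
    (Polynomial.aeval f p) x = p.eval μ • x := by
  induction p using Polynomial.induction_on' with
  | add p q hp hq => simp [hp, hq, add_smul]
  | monomial n a =>
    have hpow : ∀ m : ℕ, (f ^ m) x = μ ^ m • x := by
      intro m
      induction m with
      | zero => simp
      | succ m ih =>
        rw [pow_succ, Module.End.mul_apply, hx, map_smul, ih, smul_smul, pow_succ]
        ring_nf
    simp [Polynomial.aeval_monomial, Module.End.mul_apply, hpow, smul_smul,
      Polynomial.eval_monomial, Algebra.algebraMap_eq_smul_one]

/-- **Formal core of the Deninger–Murre decomposition.** Let `R` be an associative unital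
`ℚ`-algebra, `N ≥ 0`, and `π₀, …, π_N ∈ R` with `∑ π_i = 1`. Suppose `γ : ℤ → R` satisfies
`γ(n) * π_j = n^{N−j} • π_j` for every integer `n` and every `j`. Then the `π_i` are
pairwise orthogonal idempotents. -/
theorem pairwise_orthogonal_idempotents_of_eigen
    (R : Type*) [Ring R] [Algebra ℚ R] (N : ℕ) (π : Fin (N + 1) → R)
    (hsum : ∑ i : Fin (N + 1), π i = 1) (γ : ℤ → R)
    (hγ : ∀ (n : ℤ) (j : Fin (N + 1)), γ n * π j = ((n : ℚ) ^ (N - (j : ℕ))) • π j) :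
    (∀ i j : Fin (N + 1), i ≠ j → π i * π j = 0) ∧ (∀ j, π j * π j = π j) := by
  set μ : Fin (N + 1) → ℚ := fun i => (2 : ℚ) ^ (N - (i : ℕ)) with hμ
  have hμinj : Function.Injective μ := by
    intro a b hab
    have h2 : StrictMono (fun m : ℕ => (2 : ℚ) ^ m) := pow_right_strictMono₀ one_lt_two
    have : N - (a : ℕ) = N - (b : ℕ) := h2.injective hab
    have ha := Nat.lt_succ_iff.mp a.isLt
    have hb := Nat.lt_succ_iff.mp b.isLt
    ext
    omega
  set f : Module.End ℚ R := LinearMap.mulLeft ℚ (γ 2) with hf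
  have hγ2 : ∀ j, γ 2 * π j = μ j • π j := by
    intro j
    have := hγ 2 j
    push_cast at this
    simpa [hμ] using this
  -- main claim: π i * π j = if i = j then π j else 0
  have key : ∀ i j : Fin (N + 1), π i * π j = if i = j then π j else 0 := by
    intro i j
    have heig : ∀ k, f (π k * π j) = μ k • (π k * π j) := by
      intro k
      simp only [hf, LinearMap.mulLeft_apply, ← mul_assoc, hγ2 k, smul_mul_assoc]
    have hπj : f (π j) = μ j • π j := by
      simp only [hf, LinearMap.mulLeft_apply, hγ2 j]
    set p : ℚ[X] := Lagrange.basis Finset.univ μ i with hp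
    have h1 : (Polynomial.aeval f p) (π j) = p.eval (μ j) • π j :=
      aeval_apply_of_smul_eq f (μ j) (π j) hπj p
    have h2 : (Polynomial.aeval f p) (π j) = π i * π j := by
      have hsplit : π j = ∑ k : Fin (N + 1), π k * π j := by
        rw [← Finset.sum_mul, hsum, one_mul]
      conv_lhs => rw [hsplit]
      rw [map_sum]
      have hterm : ∀ k : Fin (N + 1), (Polynomial.aeval f p) (π k * π j)
          = if k = i then π i * π j else 0 := by
        intro k
        rw [aeval_apply_of_smul_eq f (μ k) (π k * π j) (heig k) p]
        by_cases hk : k = i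
        · subst hk
          rw [hp, Lagrange.eval_basis_self (hμinj.injOn) (Finset.mem_univ k), one_smul,
            if_pos rfl]
        · rw [hp, Lagrange.eval_basis_of_ne (Ne.symm hk) (Finset.mem_univ k), zero_smul,
            if_neg hk]
      rw [Finset.sum_congr rfl fun k _ => hterm k, Finset.sum_ite_eq' _ i]
      simp
    rw [h1] at h2
    by_cases hij : i = j
    · subst hij
      rw [Lagrange.eval_basis_self (hμinj.injOn) (Finset.mem_univ i), one_smul] at h2
      simp [← h2]
    · rw [Lagrange.eval_basis_of_ne (fun h => hij h) (Finset.mem_univ j), zero_smul] at h2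
      simp [hij, ← h2]
  exact ⟨fun i j hij => by simpa [hij] using key i j, fun j => by simpa using key j j⟩
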